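/- Let n and r be natural numbers with 1 ≤ r ≤ n, and let L(U_{r,n}) be the finite lattice consisting of all subsets A of Fin n with |A| < r together with the full set Fin n, ordered by inclusion, with integer-valued Möbius function μ. Then the sum of |μ(A,B)| over all pairs (A,B) of elements of L(U_{r,n}) with A ⊆ B equals 1 + 2·Σ_{i=0}^{r−1} Σ_{k=0}^{r−i−1} C(n,i)·C(n−i−1,k), where C denotes the binomial coefficient. -/

import Mathlib

/-!
Every interval `[A, B]` of `L(U_{r,n})` with `B ≠ [n]` is a Boolean lattice, so
`μ(A, B) = (-1)^|B \ A|` there.  The defining recursion at the top then makes `μ(A, [n])` a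
partial alternating sum of binomial coefficients, `μ(A, [n]) = (-1)^(r-a) C(n-a-1, r-a-1)` for
`|A| = a`.  Hence the row sum `Σ_B |μ(A, B)|` is `Σ_{j<r-a} C(n-a, j) + C(n-a-1, r-a-1)`,
which is `2 Σ_{k<r-a} C(n-a-1, k)` by Pascal's rule; summing over the `C(n, a)` flats of rank
`a < r`, plus `1` for `A = [n]`, gives the formula.
-/

open Finset

theorem Nat.sum_range_choose_succ_add_choose (N m : ℕ) :
    ∑ j ∈ range (m + 1), (N + 1).choose j + N.choose m =
      2 * ∑ k ∈ range (m + 1), N.choose k := by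
  induction m with
  | zero => simp
  | succ m ih =>
    rw [sum_range_succ, Nat.choose_succ_succ' N m, sum_range_succ N.choose]
    omega

theorem Finset.sum_powerset_filter_card_lt {β M : Type*} [AddCommMonoid M] (s : Finset β)
    (m : ℕ) (f : ℕ → M) :
    ∑ T ∈ s.powerset with T.card < m, f T.card =
      ∑ j ∈ range m, s.card.choose j • f j := by
  rw [← sum_fiberwise_of_maps_to (g := card) (t := range m)
    fun T hT => mem_range.2 (mem_filter.1 hT).2]
  refine sum_congr rfl fun j hj => ?_
  have hfiber : {T ∈ {T ∈ s.powerset | T.card < m} | T.card = j} = s.powersetCard j := by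
    rw [powersetCard_eq_filter, filter_filter]
    exact filter_congr fun T _ => by grind
  rw [hfiber, ← card_powersetCard, ← sum_const]
  exact sum_congr rfl fun T hT => by rw [(mem_powersetCard.1 hT).2]

abbrev UniformFlat (α : Type*) [Fintype α] (r : ℕ) :=
  {A : Finset α // A.card < r ∨ A = univ}

namespace UniformFlat

variable {α : Type*} [Fintype α] {r : ℕ}

def top : UniformFlat α r := ⟨univ, Or.inr rfl⟩

theorem card_lt_of_ne_top {A : UniformFlat α r} (h : A ≠ top) : A.1.card < r :=
  A.2.resolve_right fun hA => h (Subtype.ext hA)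

variable [DecidableEq α] {M : Type*} [AddCommMonoid M]

theorem filter_top_subset :
    univ.filter (fun B : UniformFlat α r => (top : UniformFlat α r).1 ⊆ B.1) = {top} := by
  ext B
  simp [top, univ_subset_iff, Subtype.ext_iff]

theorem sum_Icc_eq_sum_powerset {p q : Finset α} (hpq : p ⊆ q) (hq : q.card < r)
    (f : Finset α → M) :
    ∑ z ∈ univ.filter (fun z : UniformFlat α r => p ⊆ z.1 ∧ z.1 ⊆ q), f (z.1 \ p) =
      ∑ T ∈ (q \ p).powerset, f T := by
  refine sum_bij' (fun z _ => z.1 \ p)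
    (fun T hT => ⟨T ∪ p, Or.inl ?_⟩) ?_ ?_ ?_ ?_ fun _ _ => rfl
  · have hTq : T ∪ p ⊆ q := union_subset ((mem_powerset.1 hT).trans sdiff_subset) hpq
    exact (card_le_card hTq).trans_lt hq
  · intro z hz
    exact mem_powerset.2 (sdiff_subset_sdiff (mem_filter.1 hz).2.2 subset_rfl)
  · intro T hT
    have hT := mem_powerset.1 hT
    simp only [mem_filter, mem_univ, true_and]
    exact ⟨subset_union_right, union_subset (hT.trans sdiff_subset) hpq⟩
  · intro z hz
    exact Subtype.ext (sdiff_union_of_subset (mem_filter.1 hz).2.1)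
  · intro T hT
    exact union_sdiff_cancel_right (disjoint_of_subset_left (mem_powerset.1 hT) sdiff_disjoint)

theorem sum_erase_top_superset (hr : r ≤ Fintype.card α) (p : Finset α) (f : Finset α → M) :
    ∑ z ∈ (univ.filter fun z : UniformFlat α r => p ⊆ z.1).erase top, f (z.1 \ p) =
      ∑ T ∈ (univ \ p).powerset with T.card < r - p.card, f T := by
  refine sum_bij' (fun z _ => z.1 \ p)
    (fun T hT => ⟨T ∪ p, Or.inl ?_⟩) ?_ ?_ ?_ ?_ fun _ _ => rfl
  · have hT := mem_filter.1 hT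
    grind [card_union_le]
  · intro z hz
    obtain ⟨hz, -, hpz⟩ := mem_erase.1 hz |>.imp_right mem_filter.1
    have hzr := card_lt_of_ne_top hz
    simp only [mem_filter, mem_powerset, card_sdiff_of_subset hpz]
    exact ⟨sdiff_subset_sdiff (subset_univ _) subset_rfl, by have := card_le_card hpz; omega⟩
  · intro T hT
    obtain ⟨hT, hTr⟩ := mem_filter.1 hT
    have hTp : Disjoint T p := disjoint_of_subset_left (mem_powerset.1 hT) sdiff_disjoint
    refine mem_erase.2 ⟨fun htop => ?_, mem_filter.2 ⟨mem_univ _, subset_union_right⟩⟩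
    have hcard := congrArg card (congrArg Subtype.val htop)
    simp only [top, card_univ, card_union_of_disjoint hTp] at hcard
    omega
  · intro z hz
    exact Subtype.ext (sdiff_union_of_subset (mem_filter.1 (mem_erase.1 hz).2).2)
  · intro T hT
    exact union_sdiff_cancel_right
      (disjoint_of_subset_left (mem_powerset.1 (mem_filter.1 hT).1) sdiff_disjoint)

theorem sum_erase_top_superset_card (hr : r ≤ Fintype.card α) (p : Finset α) (f : ℕ → M) :
    ∑ z ∈ (univ.filter fun z : UniformFlat α r => p ⊆ z.1).erase top, f (z.1 \ p).card =
      ∑ j ∈ range (r - p.card), (Fintype.card α - p.card).choose j • f j := by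
  rw [sum_erase_top_superset hr p (f ·.card), sum_powerset_filter_card_lt,
    card_univ_sdiff]

theorem sum_erase_top (hr : r ≤ Fintype.card α) (f : ℕ → M) :
    ∑ z ∈ (univ : Finset (UniformFlat α r)).erase top, f z.1.card =
      ∑ j ∈ range r, (Fintype.card α).choose j • f j := by
  simpa using sum_erase_top_superset_card hr ∅ f

structure IsMobius (μ : UniformFlat α r → UniformFlat α r → ℤ) : Prop where
  apply_self : ∀ p, μ p p = 1
  sum_Icc_eq_zero : ∀ p q, p.1 ⊆ q.1 → p ≠ q →
    ∑ z ∈ univ.filter (fun z => p.1 ⊆ z.1 ∧ z.1 ⊆ q.1), μ p z = 0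

namespace IsMobius

variable {μ : UniformFlat α r → UniformFlat α r → ℤ}

theorem apply_of_card_lt (hμ : IsMobius μ) {p q : UniformFlat α r} (hpq : p.1 ⊆ q.1)
    (hq : q.1.card < r) : μ p q = (-1) ^ (q.1 \ p.1).card := by
  by_cases hpq' : p = q
  · subst hpq'
    simp [hμ.apply_self]
  -- `μ p ·` and `(-1) ^ #(· \ p)` both sum to zero over `[p, q]` and agree strictly below `q`
  have hsum : ∑ z ∈ univ.filter (fun z : UniformFlat α r => p.1 ⊆ z.1 ∧ z.1 ⊆ q.1),
      (μ p z - (-1) ^ (z.1 \ p.1).card) = 0 := by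
    have hne : (q.1 \ p.1).Nonempty :=
      sdiff_nonempty.2 fun h => hpq' (Subtype.ext (subset_antisymm hpq h))
    rw [sum_sub_distrib, hμ.sum_Icc_eq_zero p q hpq hpq',
      sum_Icc_eq_sum_powerset hpq hq fun T => (-1 : ℤ) ^ T.card,
      sum_powerset_neg_one_pow_card_of_nonempty hne, sub_zero]
  have hq_mem : q ∈ univ.filter (fun z : UniformFlat α r => p.1 ⊆ z.1 ∧ z.1 ⊆ q.1) :=
    mem_filter.2 ⟨mem_univ q, hpq, subset_rfl⟩
  rw [sum_eq_single_of_mem q hq_mem fun z hz hzq => ?_] at hsum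
  · exact sub_eq_zero.1 hsum
  · obtain ⟨hpz, hzq'⟩ := (mem_filter.1 hz).2
    have hlt : z.1.card < q.1.card :=
      card_lt_card (ssubset_of_subset_of_ne hzq' fun h => hzq (Subtype.ext h))
    rw [hμ.apply_of_card_lt hpz (hlt.trans hq), sub_self]
termination_by q.1.card

theorem apply_top (hμ : IsMobius μ) (hr : r ≤ Fintype.card α) {p : UniformFlat α r}
    (hp : p.1.card < r) :
    μ p top = (-1) ^ (r - p.1.card) *
      ((Fintype.card α - p.1.card - 1).choose (r - p.1.card - 1) : ℤ) := by
  have hptop : p ≠ top := fun h => by simp [h, top] at hp; omega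
  have hIcc :
      univ.filter (fun z : UniformFlat α r => p.1 ⊆ z.1 ∧ z.1 ⊆ (top : UniformFlat α r).1) =
      univ.filter (fun z : UniformFlat α r => p.1 ⊆ z.1) :=
    filter_congr fun z _ => and_iff_left (subset_univ _)
  have h := hμ.sum_Icc_eq_zero p top (subset_univ _) hptop
  rw [hIcc, ← add_sum_erase _ _ (mem_filter.2 ⟨mem_univ top, subset_univ _⟩),
    sum_congr rfl fun z hz => hμ.apply_of_card_lt (mem_filter.1 (mem_erase.1 hz).2).2
      (card_lt_of_ne_top (mem_erase.1 hz).1),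
    sum_erase_top_superset_card hr p.1 fun j => (-1 : ℤ) ^ j] at h
  obtain ⟨m, hm⟩ : ∃ m, r - p.1.card = m + 1 := ⟨r - p.1.card - 1, by omega⟩
  obtain ⟨N, hN⟩ : ∃ N, Fintype.card α - p.1.card = N + 1 :=
    ⟨Fintype.card α - p.1.card - 1, by omega⟩
  simp only [hm, hN, nsmul_eq_mul, mul_comm, Int.alternating_sum_range_choose_eq_choose] at h
  rw [hN, hm, Nat.add_sub_cancel, Nat.add_sub_cancel, pow_succ]
  linarith

theorem sum_abs_Ici (hμ : IsMobius μ) (hr : r ≤ Fintype.card α) {p : UniformFlat α r}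
    (hp : p.1.card < r) :
    ∑ B ∈ univ.filter (fun B : UniformFlat α r => p.1 ⊆ B.1), |μ p B| =
      2 * ∑ k ∈ range (r - p.1.card), ((Fintype.card α - p.1.card - 1).choose k : ℤ) := by
  have habs : ∀ B ∈ (univ.filter fun B : UniformFlat α r => p.1 ⊆ B.1).erase top,
      |μ p B| = 1 := by
    intro B hB
    obtain ⟨hB, -, hpB⟩ := mem_erase.1 hB |>.imp_right mem_filter.1
    rw [hμ.apply_of_card_lt hpB (card_lt_of_ne_top hB), abs_pow, abs_neg, abs_one, one_pow]
  have hcount := sum_erase_top_superset_card hr p.1 fun _ => (1 : ℤ)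
  rw [← add_sum_erase _ _ (mem_filter.2 ⟨mem_univ top, subset_univ _⟩), sum_congr rfl habs,
    hcount, hμ.apply_top hr hp, abs_mul, abs_pow, abs_neg, abs_one, one_pow, one_mul,
    Int.abs_natCast]
  obtain ⟨m, hm⟩ : ∃ m, r - p.1.card = m + 1 := ⟨r - p.1.card - 1, by omega⟩
  obtain ⟨N, hN⟩ : ∃ N, Fintype.card α - p.1.card = N + 1 :=
    ⟨Fintype.card α - p.1.card - 1, by omega⟩
  rw [hN, hm, Nat.add_sub_cancel, Nat.add_sub_cancel]
  simp only [nsmul_eq_mul, mul_one]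
  exact_mod_cast (add_comm _ _).trans (Nat.sum_range_choose_succ_add_choose N m)

end IsMobius

end UniformFlat

theorem mobius_uniform_flats_total_sum_general (n r : ℕ) (hrn : r ≤ n)
    (μ : {A : Finset (Fin n) // A.card < r ∨ A = Finset.univ} →
         {A : Finset (Fin n) // A.card < r ∨ A = Finset.univ} → ℤ)
    (hrefl : ∀ p, μ p p = 1)
    (hsum : ∀ p q, p.1 ⊆ q.1 → p ≠ q →
      ∑ z ∈ Finset.univ.filter (fun z => p.1 ⊆ z.1 ∧ z.1 ⊆ q.1), μ p z = 0) :
    ∑ A : {A : Finset (Fin n) // A.card < r ∨ A = Finset.univ},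
        ∑ B ∈ Finset.univ.filter (fun B => A.1 ⊆ B.1), |μ A B| =
      1 + 2 * ∑ i ∈ Finset.range r, ∑ k ∈ Finset.range (r - i),
        (Nat.choose n i * Nat.choose (n - i - 1) k : ℤ) := by
  have hμ : UniformFlat.IsMobius μ := ⟨hrefl, hsum⟩
  have hr : r ≤ Fintype.card (Fin n) := by simpa using hrn
  rw [← add_sum_erase _ _ (mem_univ UniformFlat.top), UniformFlat.filter_top_subset,
    sum_singleton, hrefl, abs_one,
    sum_congr rfl fun A hA => hμ.sum_abs_Ici hr
      (UniformFlat.card_lt_of_ne_top (ne_of_mem_erase hA)),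
    UniformFlat.sum_erase_top hr fun i => 2 * ∑ k ∈ range (r - i),
      ((Fintype.card (Fin n) - i - 1).choose k : ℤ)]
  simp only [Fintype.card_fin, nsmul_eq_mul, mul_sum]
  congr 1
  exact sum_congr rfl fun i _ => sum_congr rfl fun k _ => by ring

/-- Let `L(U_{r,n})` (for `1 ≤ r ≤ n`) be the lattice of flats of the rank `r` uniform
matroid on `n` elements, with integer-valued Möbius function `μ`.  The sum of `|μ(A,B)|`
over all pairs `A ⊆ B` of elements of `L(U_{r,n})` equals
`1 + 2·Σ_{i=0}^{r−1} Σ_{k=0}^{r−i−1} C(n,i)·C(n−i−1,k)`, the total number of faces of the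
Folkman–Lawrence representation of the rank `r` uniform oriented matroid on `n` elements. -/
theorem mobius_uniform_flats_total_sum (n r : ℕ) (hr : 1 ≤ r) (hrn : r ≤ n)
    (μ : {A : Finset (Fin n) // A.card < r ∨ A = Finset.univ} →
         {A : Finset (Fin n) // A.card < r ∨ A = Finset.univ} → ℤ)
    (hrefl : ∀ p, μ p p = 1)
    (hsum : ∀ p q, p.1 ⊆ q.1 → p ≠ q →
      ∑ z ∈ Finset.univ.filter (fun z => p.1 ⊆ z.1 ∧ z.1 ⊆ q.1), μ p z = 0) :
    ∑ A : {A : Finset (Fin n) // A.card < r ∨ A = Finset.univ},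
        ∑ B ∈ Finset.univ.filter (fun B => A.1 ⊆ B.1), |μ A B| =
      1 + 2 * ∑ i ∈ Finset.range r, ∑ k ∈ Finset.range (r - i),
        (Nat.choose n i * Nat.choose (n - i - 1) k : ℤ) :=
  mobius_uniform_flats_total_sum_general n r hrn μ hrefl hsum
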